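/- arXiv:1412.3491 — 2 statements merged into one kernel-verified Lean document; each statement's English description precedes it below -/
import Mathlib

section
/- Let u, v ∈ {1,2}^{ℤ_{>0}}. If d_L(X_u, X_v) < log 2, then u = v. -/
open ENNReal

/-- The dilation (smallest Lipschitz constant) of a map between metric spaces. -/
noncomputable def dil {X : Type*} {Y : Type*} [MetricSpace X] [MetricSpace Y]
    (f : X → Y) : ℝ :=
  sInf {K : ℝ | ∀ x y : X, dist (f x) (f y) ≤ K * dist x y}

/-- A bijection is a bi-Lipschitz homeomorphism if it and its inverse are Lipschitz. -/
def IsBiLipschitzEquiv {X : Type*} {Y : Type*} [MetricSpace X] [MetricSpace Y]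
    (f : X ≃ Y) : Prop :=
  (∃ K : NNReal, LipschitzWith K f) ∧ (∃ K : NNReal, LipschitzWith K f.symm)

/-- The quantity `|log dil f| + |log dil f⁻¹|`. -/
noncomputable def lipCost {X : Type*} {Y : Type*} [MetricSpace X] [MetricSpace Y]
    (f : X ≃ Y) : ℝ :=
  |Real.log (dil (f : X → Y))| + |Real.log (dil (f.symm : Y → X))|

/-- The Lipschitz distance: the infimum of `|log dil f| + |log dil f⁻¹|` over all
bi-Lipschitz homeomorphisms `f : X → Y` (`∞` if none exists). -/
noncomputable def lipDist (X : Type*) (Y : Type*) [MetricSpace X] [MetricSpace Y] : ℝ≥0∞ :=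
  ⨅ (f : X ≃ Y) (_ : IsBiLipschitzEquiv f), ENNReal.ofReal (lipCost f)

/-- The interval `I(n,m) = [1/2^n, 1/2^n + 1/2^(n+m)]`. -/
def Iset (n m : ℕ) : Set ℝ := Set.Icc ((1:ℝ)/2^n) ((1:ℝ)/2^n + 1/2^(n+m))

/-- `X_u = {0} ∪ ⋃_{n ≥ 1} I(n, u_n)`, with the Euclidean metric inherited from `ℝ`. -/
def Xset (u : ℕ+ → ℕ) : Set ℝ := {0} ∪ ⋃ n : ℕ+, Iset (n : ℕ) (u n)

/-!
Each `X_u` is the point `0` together with the disjoint intervals `I(n, u n)`, separated by gaps,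
so its connected pieces are `{0}` and the intervals. A homeomorphism `f : X_u → X_v` therefore
fixes `0` and permutes the intervals. If moreover `f` and `f⁻¹` both have dilation `< 2` (which is
what `d_L < log 2` provides), comparing `|f(2⁻ⁿ)|` with `2⁻ⁿ` in both directions shows that the
`n`-th interval goes to the `n`-th interval. Their lengths `2^-(n+u n)` and `2^-(n+v n)` then
differ by a factor `< 2`, which forces `u n = v n`.
-/

open Set

section Dilation

variable {X Y : Type*} [MetricSpace X] [MetricSpace Y]

lemma dist_lt_mul_dist_of_dil_lt {f : X → Y} (hf : ∃ K : NNReal, LipschitzWith K f) {c : ℝ}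
    (hc : dil f < c) {a b : X} (hab : a ≠ b) : dist (f a) (f b) < c * dist a b := by
  obtain ⟨K, hK⟩ := hf
  have hne : {k : ℝ | ∀ x y, dist (f x) (f y) ≤ k * dist x y}.Nonempty :=
    ⟨K, fun x y => hK.dist_le_mul x y⟩
  obtain ⟨k, hk, hkc⟩ := exists_lt_of_csInf_lt hne hc
  calc dist (f a) (f b) ≤ k * dist a b := hk a b
    _ < c * dist a b := mul_lt_mul_of_pos_right hkc (dist_pos.2 hab)

lemma IsBiLipschitzEquiv.symm {f : X ≃ Y} (hf : IsBiLipschitzEquiv f) :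
    IsBiLipschitzEquiv f.symm :=
  ⟨hf.2, hf.1⟩

lemma exists_lipCost_lt_of_lipDist_lt {r : ℝ} (h : lipDist X Y < ENNReal.ofReal r) :
    ∃ f : X ≃ Y, IsBiLipschitzEquiv f ∧ lipCost f < r := by
  simp only [lipDist, iInf_lt_iff] at h
  obtain ⟨f, hf, hlt⟩ := h
  exact ⟨f, hf, (ENNReal.ofReal_lt_ofReal_iff'.1 hlt).1⟩

lemma dil_lt_of_lipCost_lt {f : X ≃ Y} {c : ℝ} (hc : 0 < c) (h : lipCost f < Real.log c) :
    dil f < c ∧ dil f.symm < c := by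
  have lt_of_abs_log_lt : ∀ d : ℝ, |Real.log d| < Real.log c → d < c := fun d hd => by
    by_contra! hcd
    linarith [Real.log_le_log hc hcd, le_abs_self (Real.log d)]
  unfold lipCost at h
  exact ⟨lt_of_abs_log_lt _ (by linarith [abs_nonneg (Real.log (dil f.symm))]),
    lt_of_abs_log_lt _ (by linarith [abs_nonneg (Real.log (dil f))])⟩

end Dilation

lemma two_mul_one_div_two_pow_le {a b : ℕ} (h : a < b) : 2 * (1 / 2 ^ b : ℝ) ≤ 1 / 2 ^ a :=
  calc 2 * (1 / 2 ^ b : ℝ) ≤ 2 * (1 / 2 ^ (a + 1)) :=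
        mul_le_mul_of_nonneg_left (one_div_pow_le_one_div_pow_of_le one_le_two h) zero_le_two
    _ = 1 / 2 ^ a := by rw [pow_succ]; field_simp

lemma zero_notMem_Iset (n m : ℕ) : (0 : ℝ) ∉ Iset n m :=
  fun h => (not_le.2 (by positivity : (0 : ℝ) < 1 / 2 ^ n)) h.1

lemma left_mem_Iset (n m : ℕ) : (1 : ℝ) / 2 ^ n ∈ Iset n m :=
  ⟨le_rfl, le_add_of_nonneg_right (by positivity)⟩

lemma right_mem_Iset (n m : ℕ) : (1 : ℝ) / 2 ^ n + 1 / 2 ^ (n + m) ∈ Iset n m :=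
  ⟨le_add_of_nonneg_right (by positivity), le_rfl⟩

lemma gap_lt_of_mem_Iset {k n m : ℕ} {x : ℝ} (hkn : k ≤ n) (hx : x ∈ Iset k m) :
    7 / 2 ^ (n + 3) < x :=
  calc (7 : ℝ) / 2 ^ (n + 3) < 1 / 2 ^ n := by rw [pow_add]; field_simp; norm_num
    _ ≤ 1 / 2 ^ k := one_div_pow_le_one_div_pow_of_le one_le_two hkn
    _ ≤ x := hx.1

lemma lt_gap_of_mem_Iset {k n m : ℕ} {x : ℝ} (hm : 1 ≤ m) (hnk : n < k) (hx : x ∈ Iset k m) :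
    x < 7 / 2 ^ (n + 3) :=
  calc x ≤ 1 / 2 ^ k + 1 / 2 ^ (k + m) := hx.2
    _ ≤ 1 / 2 ^ (n + 1) + 1 / 2 ^ (n + 2) :=
        add_le_add (one_div_pow_le_one_div_pow_of_le one_le_two (by omega))
          (one_div_pow_le_one_div_pow_of_le one_le_two (by omega))
    _ < 7 / 2 ^ (n + 3) := by simp only [pow_add]; field_simp; norm_num

namespace Xset

variable {u v : ℕ+ → ℕ}

lemma Iset_subset (u : ℕ+ → ℕ) (n : ℕ+) : Iset n (u n) ⊆ Xset u :=
  fun _ hx => Or.inr (mem_iUnion.2 ⟨n, hx⟩)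

/-- `7 / 2 ^ (n + 3)` lies strictly between the blocks `n + 1` and `n`, since
`3 / 2 ^ (n + 2) < 7 / 2 ^ (n + 3) < 1 / 2 ^ n`. -/
lemma gap_notMem (hu : ∀ n, 1 ≤ u n) (n : ℕ) : (7 : ℝ) / 2 ^ (n + 3) ∉ Xset u := by
  rintro (h0 | hx)
  · exact (by positivity : (0 : ℝ) < 7 / 2 ^ (n + 3)).ne' h0
  obtain ⟨k, hk⟩ := mem_iUnion.1 hx
  rcases le_or_gt (k : ℕ) n with hkn | hnk
  · exact (gap_lt_of_mem_Iset hkn hk).ne rfl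
  · exact (lt_gap_of_mem_Iset (hu k) hnk hk).ne rfl

lemma eq_of_mem_Iset (hu : ∀ n, 1 ≤ u n) {k n : ℕ+} {x : ℝ} (hk : x ∈ Iset k (u k))
    (hn : x ∈ Iset n (u n)) : k = n := by
  by_contra hne
  rcases lt_or_gt_of_ne hne with hkn | hnk
  · exact (lt_gap_of_mem_Iset (hu n) hkn hn).not_gt (gap_lt_of_mem_Iset le_rfl hk)
  · exact (lt_gap_of_mem_Iset (hu k) hnk hk).not_gt (gap_lt_of_mem_Iset le_rfl hn)

lemma mem_Iset_of_isPreconnected (hu : ∀ n, 1 ≤ u n) {S : Set ℝ} (hS : IsPreconnected S)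
    (hSX : S ⊆ Xset u) {n : ℕ+} {x y : ℝ} (hx : x ∈ S) (hxn : x ∈ Iset n (u n)) (hy : y ∈ S) :
    y ∈ Iset n (u n) := by
  have between : ∀ c ∈ uIcc x y, c ∈ Xset u :=
    fun c hc => hSX (hS.ordConnected.uIcc_subset hx hy hc)
  rcases hSX hy with rfl | hyX
  · exact (gap_notMem hu n (between _ (mem_uIcc.2 (Or.inr
      ⟨by positivity, (gap_lt_of_mem_Iset le_rfl hxn).le⟩)))).elim
  obtain ⟨k, hk⟩ := mem_iUnion.1 hyX
  rcases lt_trichotomy k n with hkn | rfl | hnk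
  · exact (gap_notMem hu k (between _ (mem_uIcc.2 (Or.inl
      ⟨(lt_gap_of_mem_Iset (hu n) hkn hxn).le, (gap_lt_of_mem_Iset le_rfl hk).le⟩)))).elim
  · exact hk
  · exact (gap_notMem hu n (between _ (mem_uIcc.2 (Or.inr
      ⟨(lt_gap_of_mem_Iset (hu k) hnk hk).le, (gap_lt_of_mem_Iset le_rfl hxn).le⟩)))).elim

lemma map_mem_Iset_of_mem_Iset (hv : ∀ n, 1 ≤ v n) {g : Xset u → Xset v} (hg : Continuous g)
    {n m : ℕ+} {p q : Xset u} (hp : (p : ℝ) ∈ Iset n (u n)) (hq : (q : ℝ) ∈ Iset n (u n))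
    (hgp : (g p : ℝ) ∈ Iset m (v m)) : (g q : ℝ) ∈ Iset m (v m) := by
  have : PreconnectedSpace (Iset n (u n)) := Subtype.preconnectedSpace isPreconnected_Icc
  have hS :
      IsPreconnected (range fun t : Iset n (u n) => (g (inclusion (Iset_subset u n) t) : ℝ)) :=
    isPreconnected_range (continuous_subtype_val.comp (hg.comp (continuous_inclusion _)))
  refine mem_Iset_of_isPreconnected hv hS ?_ ⟨⟨p, hp⟩, rfl⟩ hgp ⟨⟨q, hq⟩, rfl⟩
  rintro _ ⟨t, rfl⟩
  exact (g _).2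

def origin (u : ℕ+ → ℕ) : Xset u := ⟨0, Or.inl rfl⟩

noncomputable def leftEnd (u : ℕ+ → ℕ) (n : ℕ+) : Xset u :=
  ⟨1 / 2 ^ (n : ℕ), Iset_subset u n (left_mem_Iset _ _)⟩

noncomputable def rightEnd (u : ℕ+ → ℕ) (n : ℕ+) : Xset u :=
  ⟨1 / 2 ^ (n : ℕ) + 1 / 2 ^ ((n : ℕ) + u n), Iset_subset u n (right_mem_Iset _ _)⟩

lemma leftEnd_ne_origin (n : ℕ+) : leftEnd u n ≠ origin u := by
  intro h
  have := congrArg Subtype.val h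
  simp [leftEnd, origin] at this

lemma leftEnd_ne_rightEnd (n : ℕ+) : leftEnd u n ≠ rightEnd u n := by
  intro h
  have := congrArg Subtype.val h
  simp [leftEnd, rightEnd] at this

lemma dist_origin_leftEnd (n : ℕ+) : dist (origin u) (leftEnd u n) = 1 / 2 ^ (n : ℕ) := by
  simp [Subtype.dist_eq, origin, leftEnd, Real.dist_eq]

lemma dist_leftEnd_rightEnd (n : ℕ+) :
    dist (leftEnd u n) (rightEnd u n) = 1 / 2 ^ ((n : ℕ) + u n) := by
  simp [Subtype.dist_eq, leftEnd, rightEnd]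

lemma exists_mem_Iset {x : Xset u} (hx : x ≠ origin u) : ∃ n : ℕ+, (x : ℝ) ∈ Iset n (u n) := by
  rcases x.2 with h | h
  · exact absurd (Subtype.ext (mem_singleton_iff.1 h)) hx
  · exact mem_iUnion.1 h

lemma map_origin (hu : ∀ n, 1 ≤ u n) (f : Xset u ≃ Xset v) (hf : Continuous f.symm) :
    f (origin u) = origin v := by
  by_contra hne
  obtain ⟨m, hm⟩ := exists_mem_Iset hne
  have symm_eq_origin : ∀ q : Xset v, (q : ℝ) ∈ Iset m (v m) → f.symm q = origin u := by
    intro q hq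
    by_contra hq0
    obtain ⟨k, hk⟩ := exists_mem_Iset hq0
    have h0 := map_mem_Iset_of_mem_Iset hu hf hq hm hk
    rw [f.symm_apply_apply] at h0
    exact zero_notMem_Iset _ _ h0
  exact leftEnd_ne_rightEnd m (f.symm.injective
    ((symm_eq_origin _ (left_mem_Iset _ _)).trans (symm_eq_origin _ (right_mem_Iset _ _)).symm))

lemma le_of_map_leftEnd_mem {f : Xset u → Xset v} (hf : ∃ K : NNReal, LipschitzWith K f)
    (hdil : dil f < 2) (h0 : f (origin u) = origin v) {n m : ℕ+}
    (hm : (f (leftEnd u n) : ℝ) ∈ Iset m (v m)) : (n : ℕ) ≤ m := by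
  have hlt := dist_lt_mul_dist_of_dil_lt hf hdil (leftEnd_ne_origin n).symm
  rw [h0, dist_origin_leftEnd, Subtype.dist_eq, origin, Real.dist_eq, zero_sub, abs_neg,
    abs_of_nonneg (hm.1.trans' (by positivity))] at hlt
  by_contra! hmn
  linarith [hm.1, two_mul_one_div_two_pow_le hmn]

lemma le_of_mapsTo_Iset (f : Xset u ≃ Xset v) (hf : ∃ K : NNReal, LipschitzWith K f.symm)
    (hdil : dil f.symm < 2) {n : ℕ+}
    (hn : ∀ x : Xset u, (x : ℝ) ∈ Iset n (u n) → (f x : ℝ) ∈ Iset n (v n)) : v n ≤ u n := by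
  have hlt := dist_lt_mul_dist_of_dil_lt hf hdil (f.injective.ne (leftEnd_ne_rightEnd n))
  rw [f.symm_apply_apply, f.symm_apply_apply, dist_leftEnd_rightEnd, Subtype.dist_eq] at hlt
  have hle := Real.dist_le_of_mem_Icc (hn (leftEnd u n) (left_mem_Iset _ _))
    (hn (rightEnd u n) (right_mem_Iset _ _))
  by_contra! hvu
  linarith [two_mul_one_div_two_pow_le (show (n : ℕ) + u n < n + v n by omega)]

lemma map_mem_Iset (hu : ∀ n, 1 ≤ u n) (hv : ∀ n, 1 ≤ v n) (f : Xset u ≃ Xset v)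
    (hf : IsBiLipschitzEquiv f) (hdil : dil f < 2) (hdil' : dil f.symm < 2) (n : ℕ+)
    (x : Xset u) (hx : (x : ℝ) ∈ Iset n (u n)) : (f x : ℝ) ∈ Iset n (v n) := by
  obtain ⟨⟨K, hK⟩, ⟨K', hK'⟩⟩ := hf
  have h0 := map_origin hu f hK'.continuous
  have h0' := map_origin hv f.symm hK.continuous
  obtain ⟨m, hm⟩ := exists_mem_Iset fun h => leftEnd_ne_origin n (f.injective (h.trans h0.symm))
  obtain ⟨k, hk⟩ := exists_mem_Iset fun h =>
    leftEnd_ne_origin m (f.symm.injective (h.trans h0'.symm))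
  have hnm := le_of_map_leftEnd_mem ⟨K, hK⟩ hdil h0 hm
  have hmk := le_of_map_leftEnd_mem ⟨K', hK'⟩ hdil' h0' hk
  have hkn : k = n := by
    have h := map_mem_Iset_of_mem_Iset hu hK'.continuous (left_mem_Iset _ _) hm hk
    rw [f.symm_apply_apply] at h
    exact eq_of_mem_Iset hu h (left_mem_Iset _ _)
  obtain rfl : m = n := PNat.coe_injective (by subst hkn; omega)
  exact map_mem_Iset_of_mem_Iset hv hK.continuous (left_mem_Iset _ _) hx hm

end Xset

open Xset in
/-- If `d_L(X_u, X_v) < log 2` then `u = v`. -/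
theorem Xset_discrete (u v : ℕ+ → ℕ) (hu : ∀ n, u n = 1 ∨ u n = 2)
    (hv : ∀ n, v n = 1 ∨ v n = 2)
    (h : lipDist ↥(Xset u) ↥(Xset v) < ENNReal.ofReal (Real.log 2)) :
    u = v := by
  have hu' : ∀ n, 1 ≤ u n := fun n => by rcases hu n with h | h <;> omega
  have hv' : ∀ n, 1 ≤ v n := fun n => by rcases hv n with h | h <;> omega
  obtain ⟨f, hf, hcost⟩ := exists_lipCost_lt_of_lipDist_lt h
  obtain ⟨hdil, hdil'⟩ := dil_lt_of_lipCost_lt two_pos hcost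
  funext n
  exact le_antisymm
    (le_of_mapsTo_Iset f.symm hf.1 hdil (map_mem_Iset hv' hu' f.symm hf.symm hdil' hdil n))
    (le_of_mapsTo_Iset f hf.2 hdil' (map_mem_Iset hu' hv' f hf hdil hdil' n))
end

section
/- For every δ > 0, the open ball B_{d_L}([0,1], δ) = {X ∈ ℳ_{[0,1]} : d_L([0,1], X) < δ}, with the metric d_L, is not separable. -/
open ENNReal

/-- A bundled compact metric space. -/
structure CptMet where
  carrier : Type
  [inst : MetricSpace carrier]
  [cpt : CompactSpace carrier]

attribute [instance] CptMet.inst CptMet.cpt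

/-!
Given countably many spaces `D n`, we build by diagonalisation a space `Y` in the ball that is at
Lipschitz distance at least `log (1 + η / 100)` from every `D n`. The space `Y` is `[0,1]` with
the `ℓ¹` metric of the graph of `η • g`, where `g` is a sum of disjoint trapezoidal bumps, the
`n`-th one of width `w_n = 100⁻⁽ⁿ⁺¹⁾` placed on `[w_n, 2 w_n]`; it is present exactly when `D n`
has no *gap pair* at scale `w_n`, i.e. no two points at distance about `w_n` without an
approximate midpoint. A bump of width `w` makes its two feet such a pair. Where no bump of width
`≥ w` is present, every pair at scale `w` has an approximate midpoint: at that scale the graph is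
either nearly flat or monotone, and a monotone graph is geodesic. Gap pairs survive
bi-Lipschitz maps close to isometries with slightly worse constants, so if `D n` were close to
`Y`, it would have a gap pair at scale `w_n` exactly when `Y` does, that is, exactly when it has
none. Finally `Y` is within `2η` of `[0,1]`, hence in the ball for `η` small.
-/

open Set Real
open scoped NNReal

section LipschitzDistance

variable {X Y : Type*} [MetricSpace X] [MetricSpace Y]

lemma dist_le_dil_mul {f : X → Y} (hf : ∃ K : ℝ≥0, LipschitzWith K f) (x y : X) :
    dist (f x) (f y) ≤ dil f * dist x y := by
  rcases eq_or_ne x y with rfl | hxy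
  · simp
  have hd : 0 < dist x y := dist_pos.2 hxy
  obtain ⟨K, hK⟩ := hf
  rw [← div_le_iff₀ hd]
  exact le_csInf ⟨K, hK.dist_le_mul⟩ fun L hL => (div_le_iff₀ hd).2 (hL x y)

lemma dil_le_of_lipschitzWith [Nontrivial X] {f : X → Y} {K : ℝ≥0} (hf : LipschitzWith K f) :
    dil f ≤ K := by
  obtain ⟨x, y, hxy⟩ := exists_pair_ne X
  have hd : 0 < dist x y := dist_pos.2 hxy
  refine csInf_le ⟨0, fun L hL => ?_⟩ hf.dist_le_mul
  exact nonneg_of_mul_nonneg_left (dist_nonneg.trans (hL x y)) hd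

lemma abs_log_dil_le [Nontrivial X] (f : X ≃ Y) {K : ℝ≥0} (hf : LipschitzWith K f)
    (hg : LipschitzWith K f.symm) : |Real.log (dil f)| ≤ Real.log K := by
  obtain ⟨x, y, hxy⟩ := exists_pair_ne X
  have hd : 0 < dist x y := dist_pos.2 hxy
  have hfxy := dist_le_dil_mul ⟨K, hf⟩ x y
  have hgxy : dist x y ≤ dil f.symm * dist (f x) (f y) := by
    simpa using dist_le_dil_mul ⟨K, hg⟩ (f x) (f y)
  have hg0 : 0 < dil f.symm := by nlinarith [dist_nonneg (x := f x) (y := f y)]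
  have hfg : 1 ≤ dil f * dil f.symm := by nlinarith
  have hf0 : 0 < dil f := by nlinarith
  have hlog : 0 ≤ Real.log (dil f) + Real.log (dil f.symm) := by
    rw [← log_mul hf0.ne' hg0.ne']
    exact log_nonneg hfg
  have hfK := log_le_log hf0 (dil_le_of_lipschitzWith hf)
  have hgK := log_le_log hg0 (haveI := f.symm.nontrivial; dil_le_of_lipschitzWith hg)
  exact abs_le.2 ⟨by linarith, hfK⟩

lemma lipDist_le_two_mul_log [Nontrivial X] (f : X ≃ Y) {K : ℝ≥0} (hf : LipschitzWith K f)
    (hg : LipschitzWith K f.symm) : lipDist X Y ≤ ENNReal.ofReal (2 * Real.log K) := by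
  have hY : Nontrivial Y := f.symm.nontrivial
  have hcost : lipCost f ≤ 2 * Real.log K := by
    have := abs_log_dil_le f hf hg
    have := abs_log_dil_le f.symm hg (by simpa using hf)
    unfold lipCost
    linarith
  exact (iInf₂_le f ⟨⟨K, hf⟩, ⟨K, hg⟩⟩).trans (ENNReal.ofReal_le_ofReal hcost)

lemma lipschitzWith_of_abs_log_dil_lt {f : X → Y} (hf : ∃ K : ℝ≥0, LipschitzWith K f)
    {K : ℝ≥0} (h : |Real.log (dil f)| < Real.log K) : LipschitzWith K f := by
  have hK : 0 < (K : ℝ) :=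
    lt_trans one_pos ((log_pos_iff K.2).1 ((abs_nonneg _).trans_lt h))
  have hdil : dil f < K :=
    calc dil f ≤ exp (Real.log (dil f)) := le_exp_log _
      _ ≤ exp |Real.log (dil f)| := exp_le_exp.2 (le_abs_self _)
      _ < exp (Real.log K) := exp_lt_exp.2 h
      _ = K := exp_log hK
  refine LipschitzWith.of_dist_le_mul fun x y => (dist_le_dil_mul hf x y).trans ?_
  exact mul_le_mul_of_nonneg_right hdil.le dist_nonneg

lemma exists_lipschitzWith_of_lipDist_lt {K : ℝ≥0}
    (h : lipDist X Y < ENNReal.ofReal (Real.log K)) :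
    ∃ f : X ≃ Y, LipschitzWith K f ∧ LipschitzWith K f.symm := by
  simp only [lipDist, iInf_lt_iff] at h
  obtain ⟨f, ⟨hf, hg⟩, hlt⟩ := h
  have hcost : lipCost f < Real.log K := (ENNReal.ofReal_lt_ofReal_iff'.1 hlt).1
  unfold lipCost at hcost
  exact ⟨f, lipschitzWith_of_abs_log_dil_lt hf (by linarith [abs_nonneg (Real.log (dil f.symm))]),
    lipschitzWith_of_abs_log_dil_lt hg (by linarith [abs_nonneg (Real.log (dil f))])⟩

end LipschitzDistance

@[ext]
structure GraphSpace (g : ℝ → ℝ) where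
  val : ℝ
  mem : val ∈ Icc (0 : ℝ) 1

namespace GraphSpace

variable {g : ℝ → ℝ}

def toL1 (x : GraphSpace g) : WithLp 1 (ℝ × ℝ) := WithLp.toLp 1 (x.val, g x.val)

lemma toL1_injective : Function.Injective (toL1 (g := g)) := fun _ _ h =>
  GraphSpace.ext (congrArg (fun p : WithLp 1 (ℝ × ℝ) => p.fst) h)

noncomputable instance (g : ℝ → ℝ) : MetricSpace (GraphSpace g) :=
  MetricSpace.induced toL1 toL1_injective inferInstance

lemma dist_eq (x y : GraphSpace g) : dist x y = |x.val - y.val| + |g x.val - g y.val| :=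
  WithLp.prod_dist_eq_of_L1 (toL1 x) (toL1 y)

lemma abs_val_sub_le_dist (x y : GraphSpace g) : |x.val - y.val| ≤ dist x y := by
  rw [dist_eq]
  exact le_add_of_nonneg_right (abs_nonneg _)

def ofIcc : Icc (0 : ℝ) 1 ≃ GraphSpace g where
  toFun t := ⟨t, t.2⟩
  invFun x := ⟨x.val, x.mem⟩
  left_inv _ := rfl
  right_inv _ := rfl

lemma lipschitzWith_ofIcc {K : ℝ≥0} (hg : LipschitzWith K g) :
    LipschitzWith (1 + K) (ofIcc (g := g)) :=
  LipschitzWith.of_dist_le_mul fun s t => by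
    have hst := hg.dist_le_mul s t
    rw [Real.dist_eq, Real.dist_eq] at hst
    rw [dist_eq, Subtype.dist_eq, Real.dist_eq, NNReal.coe_add, NNReal.coe_one]
    change |(s : ℝ) - t| + |g s - g t| ≤ (1 + K) * |(s : ℝ) - t|
    linarith

lemma lipschitzWith_ofIcc_symm : LipschitzWith 1 (ofIcc (g := g)).symm :=
  LipschitzWith.of_dist_le_mul fun x y => by
    rw [NNReal.coe_one, one_mul, Subtype.dist_eq, Real.dist_eq]
    exact abs_val_sub_le_dist x y

lemma compactSpace {K : ℝ≥0} (hg : LipschitzWith K g) : CompactSpace (GraphSpace g) :=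
  ofIcc.surjective.compactSpace (lipschitzWith_ofIcc hg).continuous

lemma lipDist_Icc_le {K : ℝ≥0} (hg : LipschitzWith K g) :
    lipDist (Icc (0 : ℝ) 1) (GraphSpace g) ≤ ENNReal.ofReal (2 * Real.log (1 + K)) := by
  have : Nontrivial (Icc (0 : ℝ) 1) := inferInstanceAs (Nontrivial unitInterval)
  have h := (lipschitzWith_ofIcc_symm (g := g)).weaken (K' := 1 + K) le_self_add
  exact_mod_cast lipDist_le_two_mul_log ofIcc (lipschitzWith_ofIcc hg) h

lemma dist_add_dist_eq {x y z : GraphSpace g} (hz : z.val ∈ uIcc x.val y.val)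
    (hgz : g z.val ∈ uIcc (g x.val) (g y.val)) : dist x z + dist z y = dist x y := by
  simp only [dist_eq, ← Real.dist_eq]
  rw [← segment_eq_uIcc] at hz hgz
  linarith [dist_add_dist_of_mem_segment hz, dist_add_dist_of_mem_segment hgz]

lemma exists_midpoint {x y : GraphSpace g} (hxy : x.val ≤ y.val)
    (hg : ContinuousOn g (Icc x.val y.val))
    (hmono : MonotoneOn g (Icc x.val y.val) ∨ AntitoneOn g (Icc x.val y.val)) :
    ∃ z, max (dist x z) (dist z y) ≤ dist x y / 2 := by
  set l : ℝ → ℝ := fun t => |x.val - t| + |g x.val - g t|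
  have hl : ContinuousOn l (Icc x.val y.val) := by fun_prop
  have hlx : l x.val = 0 := by simp [l]
  have hly : l y.val = dist x y := (dist_eq x y).symm
  have hmid : dist x y / 2 ∈ Icc (l x.val) (l y.val) := by
    rw [hlx, hly]
    constructor <;> linarith [dist_nonneg (x := x) (y := y)]
  obtain ⟨t, ht, hlt⟩ := intermediate_value_Icc hxy hl hmid
  set z : GraphSpace g := ⟨t, x.mem.1.trans ht.1, ht.2.trans y.mem.2⟩
  have hgt : g t ∈ uIcc (g x.val) (g y.val) := by
    rcases hmono with h | h
    · exact Icc_subset_uIcc ⟨h ⟨le_rfl, hxy⟩ ht ht.1, h ht ⟨hxy, le_rfl⟩ ht.2⟩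
    · exact Icc_subset_uIcc' ⟨h ht ⟨hxy, le_rfl⟩ ht.2, h ⟨le_rfl, hxy⟩ ht ht.1⟩
  have hxz : dist x z = dist x y / 2 := (dist_eq x z).trans hlt
  have hsum := dist_add_dist_eq (z := z) (Icc_subset_uIcc ht) hgt
  exact ⟨z, max_le hxz.le (by linarith)⟩

lemma exists_approx_midpoint {x y : GraphSpace g} (hxy : x.val ≤ y.val) {ε : ℝ}
    (hosc : ∀ s ∈ Icc x.val y.val, ∀ t ∈ Icc x.val y.val, |g s - g t| ≤ ε) :
    ∃ z, max (dist x z) (dist z y) ≤ dist x y / 2 + ε := by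
  have hm : (x.val + y.val) / 2 ∈ Icc x.val y.val := ⟨by linarith, by linarith⟩
  have hd := abs_val_sub_le_dist x y
  rw [abs_of_nonpos (by linarith)] at hd
  refine ⟨⟨(x.val + y.val) / 2, x.mem.1.trans hm.1, hm.2.trans y.mem.2⟩, max_le ?_ ?_⟩ <;>
    rw [dist_eq]
  · have := hosc _ ⟨le_rfl, hxy⟩ _ hm
    rw [abs_of_nonpos (by linarith)]
    linarith
  · have := hosc _ hm _ ⟨hxy, le_rfl⟩
    rw [abs_of_nonpos (by linarith)]
    linarith

end GraphSpace

section ApproxMidpoints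

variable {X Y : Type*} [MetricSpace X] [MetricSpace Y]

def NoApproxMidpoint (r : ℝ) (p q : X) : Prop :=
  ∀ z, r * dist p q ≤ max (dist p z) (dist z q)

def HasGapPair (X : Type*) [MetricSpace X] (r a b : ℝ) : Prop :=
  ∃ p q : X, a ≤ dist p q ∧ dist p q ≤ b ∧ NoApproxMidpoint r p q

lemma NoApproxMidpoint.map {r : ℝ} {p q : X} (h : NoApproxMidpoint r p q) (hr : 0 ≤ r)
    (f : X ≃ Y) {K : ℝ≥0} (hK : 0 < K) (hf : LipschitzWith K f) (hg : LipschitzWith K f.symm) :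
    NoApproxMidpoint (r / K ^ 2) (f p) (f q) := by
  intro z
  have hK' : (0 : ℝ) < K := hK
  have hpz := hg.dist_le_mul (f p) z
  have hzq := hg.dist_le_mul z (f q)
  simp only [Equiv.symm_apply_apply] at hpz hzq
  have hmax : r * dist p q ≤ K * max (dist (f p) z) (dist z (f q)) :=
    (h (f.symm z)).trans (max_le (hpz.trans (by gcongr; exact le_max_left _ _))
      (hzq.trans (by gcongr; exact le_max_right _ _)))
  calc r / K ^ 2 * dist (f p) (f q) ≤ r / K ^ 2 * (K * dist p q) := by
        gcongr; exact hf.dist_le_mul p q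
    _ = (r * dist p q) / K := by field_simp
    _ ≤ max (dist (f p) z) (dist z (f q)) := by rw [div_le_iff₀ hK']; linarith

lemma HasGapPair.map {r a b : ℝ} (h : HasGapPair X r a b) (hr : 0 ≤ r) (f : X ≃ Y) {K : ℝ≥0}
    (hK : 0 < K) (hf : LipschitzWith K f) (hg : LipschitzWith K f.symm) :
    HasGapPair Y (r / K ^ 2) (a / K) (K * b) := by
  obtain ⟨p, q, hap, hpb, hpq⟩ := h
  have hK' : (0 : ℝ) < K := hK
  refine ⟨f p, f q, ?_, ?_, hpq.map hr f hK hf hg⟩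
  · have hpq' := hg.dist_le_mul (f p) (f q)
    simp only [Equiv.symm_apply_apply] at hpq'
    rw [div_le_iff₀ hK', mul_comm]
    exact hap.trans hpq'
  · exact (hf.dist_le_mul p q).trans (by gcongr)

lemma HasGapPair.mono {r a b r' a' b' : ℝ} (h : HasGapPair X r a b) (hr : r' ≤ r) (ha : a' ≤ a)
    (hb : b ≤ b') : HasGapPair X r' a' b' := by
  obtain ⟨p, q, hap, hpb, hpq⟩ := h
  exact ⟨p, q, ha.trans hap, hpb.trans hb, fun z =>
    (mul_le_mul_of_nonneg_right hr dist_nonneg).trans (hpq z)⟩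

end ApproxMidpoints

lemma LipschitzWith.ciSup {α ι : Type*} [PseudoMetricSpace α] [Nonempty ι] {f : ι → α → ℝ}
    {K : ℝ≥0} (hf : ∀ i, LipschitzWith K (f i)) (hb : ∀ x, BddAbove (range fun i => f i x)) :
    LipschitzWith K fun x => ⨆ i, f i x :=
  LipschitzWith.of_le_add_mul K fun x y => ciSup_le fun i =>
    ((hf i).le_add_mul x y).trans (by gcongr; exact le_ciSup (hb y) i)

/-- Thanks to the plateau, every interval of length `< w / 2` lies where the tent is monotone or
antitone, so that the graph has exact midpoints there. -/
noncomputable def tent (w x : ℝ) : ℝ := max 0 (min (w / 4) (min (x - w) (2 * w - x)))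

section Tent

variable {w x : ℝ}

lemma tent_nonneg : 0 ≤ tent w x := le_max_left _ _

lemma tent_le (hw : 0 ≤ w) : tent w x ≤ w / 4 := max_le (by linarith) (min_le_left _ _)

lemma tent_eq_zero (h : x ≤ w ∨ 2 * w ≤ x) : tent w x = 0 := by
  refine max_eq_left (min_le_of_right_le ?_)
  rcases h with h | h
  · exact min_le_of_left_le (by linarith)
  · exact min_le_of_right_le (by linarith)

lemma min_le_tent : min (w / 4) (min (x - w) (2 * w - x)) ≤ tent w x := le_max_right _ _

lemma lipschitzWith_tent : LipschitzWith 1 (tent w) := by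
  unfold tent
  have h := ((LipschitzWith.id.sub (LipschitzWith.const w)).min
    ((LipschitzWith.const (2 * w)).sub LipschitzWith.id)).const_min (w / 4) |>.const_max 0
  simpa using h

lemma tent_eq_of_le (hx : x ≤ 7 * w / 4) : tent w x = max 0 (min (w / 4) (x - w)) := by
  unfold tent
  congr 1
  simp only [min_def]
  split_ifs <;> linarith

lemma tent_eq_of_ge (hx : 5 * w / 4 ≤ x) : tent w x = max 0 (min (w / 4) (2 * w - x)) := by
  unfold tent
  congr 1
  simp only [min_def]
  split_ifs <;> linarith

lemma monotoneOn_tent : MonotoneOn (tent w) (Iic (7 * w / 4)) := fun a ha b hb hab => by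
  rw [tent_eq_of_le ha, tent_eq_of_le hb]
  gcongr

lemma antitoneOn_tent : AntitoneOn (tent w) (Ici (5 * w / 4)) := fun a ha b hb hab => by
  rw [tent_eq_of_ge ha, tent_eq_of_ge hb]
  gcongr

lemma le_max_of_tent_le {η B t : ℝ} (hw : 0 < w) (hη : 0 ≤ η) (hη1 : η ≤ 1) (hB : 0 ≤ B)
    (htB : t ∈ Ioo w (2 * w) → tent w t ≤ B) :
    (1 / 2 + η / 8) * w ≤ max (|w - t| + η * B) (|t - 2 * w| + η * B) := by
  have hηB : 0 ≤ η * B := mul_nonneg hη hB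
  rcases le_or_gt t w with htw | htw
  · exact le_max_of_le_right (by rw [abs_of_nonpos (by linarith)]; nlinarith)
  rcases le_or_gt (2 * w) t with htw' | htw'
  · exact le_max_of_le_left (by rw [abs_of_nonpos (by linarith)]; nlinarith)
  rw [abs_of_neg (by linarith : w - t < 0), abs_of_neg (by linarith : t - 2 * w < 0)]
  rcases le_or_gt (t - w) (w / 8) with h₁ | h₁
  · exact le_max_of_le_right (by nlinarith)
  rcases le_or_gt (2 * w - t) (w / 8) with h₂ | h₂
  · exact le_max_of_le_left (by nlinarith)
  have hT : w / 8 ≤ B :=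
    ((le_min (by linarith) (le_min h₁.le h₂.le)).trans min_le_tent).trans (htB ⟨htw, htw'⟩)
  nlinarith [le_max_left (-(w - t) + η * B) (-(t - 2 * w) + η * B),
    le_max_right (-(w - t) + η * B) (-(t - 2 * w) + η * B)]

end Tent

noncomputable def scale (n : ℕ) : ℝ := (1 / 100) ^ (n + 1)

lemma scale_pos (n : ℕ) : 0 < scale n := by unfold scale; positivity

lemma scale_succ (n : ℕ) : scale (n + 1) = scale n / 100 := by
  unfold scale; ring

lemma scale_le (n : ℕ) : scale n ≤ 1 / 100 :=
  pow_le_of_le_one (by norm_num) (by norm_num) n.succ_ne_zero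

lemma scale_antitone : Antitone scale := fun _ _ h =>
  pow_le_pow_of_le_one (by norm_num) (by norm_num) (by omega)

lemma hundred_mul_scale_le {m n : ℕ} (h : m < n) : 100 * scale n ≤ scale m := by
  have := scale_antitone (Nat.succ_le_of_lt h)
  rw [scale_succ] at this
  linarith

noncomputable def bumps (S : Set ℕ) (x : ℝ) : ℝ := ⨆ m, S.indicator (fun k => tent (scale k) x) m

section Bumps

variable {S : Set ℕ} {x : ℝ}

lemma indicator_tent_le (m : ℕ) : S.indicator (fun k => tent (scale k) x) m ≤ scale m / 4 :=
  Set.indicator_apply_le' (fun _ => tent_le (scale_pos m).le) (fun _ => by linarith [scale_pos m])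

lemma bddAbove_indicator_tent (x : ℝ) :
    BddAbove (range fun m => S.indicator (fun k => tent (scale k) x) m) :=
  ⟨1, forall_mem_range.2 fun m => (indicator_tent_le m).trans (by linarith [scale_le m])⟩

lemma bumps_nonneg : 0 ≤ bumps S x :=
  le_ciSup_of_le (bddAbove_indicator_tent x) 0 (Set.indicator_nonneg (fun _ _ => tent_nonneg) _)

lemma lipschitzWith_bumps : LipschitzWith 1 (bumps S) := by
  refine LipschitzWith.ciSup (fun m => ?_) bddAbove_indicator_tent
  by_cases hm : m ∈ S
  · simpa [hm] using lipschitzWith_tent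
  · simp only [Set.indicator_of_notMem hm]
    exact LipschitzWith.const' (α := ℝ) (0 : ℝ)

lemma bumps_eq_indicator {m : ℕ} (h : ∀ k ∈ S, k ≠ m → tent (scale k) x = 0) :
    bumps S x = S.indicator (fun k => tent (scale k) x) m := by
  refine le_antisymm (ciSup_le fun k => ?_) (le_ciSup (bddAbove_indicator_tent x) m)
  rcases eq_or_ne k m with rfl | hkm
  · exact le_rfl
  · refine Set.indicator_apply_le' (fun hk => (h k hk hkm).le.trans ?_) (fun _ => ?_) <;>
      exact Set.indicator_nonneg (fun _ _ => tent_nonneg) _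

lemma bumps_eq_indicator_of_mem_Icc {m : ℕ} (hx : x ∈ Icc (scale m / 2) (50 * scale m)) :
    bumps S x = S.indicator (fun k => tent (scale k) x) m := by
  refine bumps_eq_indicator fun k _ hkm => tent_eq_zero ?_
  rcases hkm.lt_or_gt with hkm | hkm
  · have := hundred_mul_scale_le hkm
    have := scale_pos m
    left
    linarith [hx.2]
  · have := hundred_mul_scale_le hkm
    have := scale_pos k
    right
    linarith [hx.1]

lemma bumps_le_of_forall_lt {n : ℕ} (hn : n ∉ S) (h : ∀ k ∈ S, k < n → tent (scale k) x = 0) :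
    bumps S x ≤ scale n / 400 := by
  have hn0 := scale_pos n
  refine ciSup_le fun k => Set.indicator_apply_le' (fun hk => ?_) (fun _ => by linarith)
  rcases lt_trichotomy k n with hkn | rfl | hkn
  · rw [h k hk hkn]
    linarith
  · exact absurd hk hn
  · have := scale_antitone (Nat.succ_le_of_lt hkn)
    rw [scale_succ] at this
    linarith [tent_le (x := x) (scale_pos k).le]

end Bumps

abbrev BumpSpace (S : Set ℕ) (η : ℝ) : Type := GraphSpace fun x => η * bumps S x

section BumpSpace

variable {S : Set ℕ} {η : ℝ}

lemma lipschitzWith_mul_bumps : LipschitzWith ‖η‖₊ fun x => η * bumps S x := by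
  simpa [Function.comp_def] using (lipschitzWith_smul η).comp (lipschitzWith_bumps (S := S))

lemma lipDist_Icc_bumpSpace_le (hη : 0 ≤ η) :
    lipDist (Icc (0 : ℝ) 1) (BumpSpace S η) ≤ ENNReal.ofReal (2 * η) := by
  refine (GraphSpace.lipDist_Icc_le lipschitzWith_mul_bumps).trans (ENNReal.ofReal_le_ofReal ?_)
  rw [coe_nnnorm, Real.norm_of_nonneg hη]
  linarith [Real.log_le_sub_one_of_pos (x := 1 + η) (by positivity)]

lemma dist_bumpSpace (hη : 0 ≤ η) (x y : BumpSpace S η) :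
    dist x y = |x.val - y.val| + η * |bumps S x.val - bumps S y.val| := by
  rw [GraphSpace.dist_eq, ← mul_sub, abs_mul, abs_of_nonneg hη]

lemma hasGapPair_of_mem (hη : 0 ≤ η) (hη1 : η ≤ 1) {n : ℕ} (hn : n ∈ S) :
    HasGapPair (BumpSpace S η) (1 / 2 + η / 8) (scale n) (scale n) := by
  set w := scale n
  have hw : 0 < w := scale_pos n
  have hw1 : w ≤ 1 / 100 := scale_le n
  have hb : ∀ t ∈ Icc (w / 2) (50 * w), bumps S t = tent w t := fun t ht => by
    rw [bumps_eq_indicator_of_mem_Icc ht, Set.indicator_of_mem hn]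
  have hbx : bumps S w = 0 := by
    rw [hb w ⟨by linarith, by linarith⟩, tent_eq_zero (Or.inl le_rfl)]
  have hby : bumps S (2 * w) = 0 := by
    rw [hb _ ⟨by linarith, by linarith⟩, tent_eq_zero (Or.inr le_rfl)]
  let x : BumpSpace S η := ⟨w, hw.le, by linarith⟩
  let y : BumpSpace S η := ⟨2 * w, by linarith, by linarith⟩
  have hxy : dist x y = w := by
    rw [dist_bumpSpace hη]
    simp only [x, y, hbx, hby, sub_zero, abs_zero, mul_zero, add_zero]
    rw [abs_of_neg (by linarith)]
    ring
  refine ⟨x, y, hxy.ge, hxy.le, fun ⟨t, _⟩ => ?_⟩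
  rw [hxy, dist_bumpSpace hη, dist_bumpSpace hη]
  simp only [x, y, hbx, hby, zero_sub, sub_zero, abs_neg]
  refine le_max_of_tent_le hw hη hη1 (abs_nonneg _) fun ht => ?_
  rw [hb t ⟨by linarith [ht.1], by linarith [ht.2]⟩, abs_of_nonneg tent_nonneg]

lemma exists_midpoint_near_bump (hη : 0 ≤ η) {m n : ℕ} (hm : m ∈ S) (hmn : m < n)
    {x y : BumpSpace S η} (hxy : x.val ≤ y.val) (hd : dist x y ≤ 4 * scale n)
    (hy : scale m < y.val) (hx : x.val < 2 * scale m) :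
    ∃ z, max (dist x z) (dist z y) ≤ dist x y / 2 := by
  set w := scale m
  have hw : 0 < w := scale_pos m
  have hnm := hundred_mul_scale_le hmn
  have hvu : y.val - x.val ≤ dist x y := by
    simpa [abs_of_nonneg (sub_nonneg.2 hxy), dist_comm] using
      GraphSpace.abs_val_sub_le_dist y x
  have hb : ∀ t ∈ Icc x.val y.val, bumps S t = tent w t := fun t ht => by
    rw [bumps_eq_indicator_of_mem_Icc (m := m) ⟨by linarith [ht.1], by linarith [ht.2]⟩,
      Set.indicator_of_mem hm]
  refine GraphSpace.exists_midpoint hxy lipschitzWith_mul_bumps.continuous.continuousOn ?_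
  rcases le_or_gt y.val (7 * w / 4) with h | h
  · refine Or.inl fun a ha b hb' hab => ?_
    simp only [hb a ha, hb b hb']
    exact mul_le_mul_of_nonneg_left
      (monotoneOn_tent (ha.2.trans h) (hb'.2.trans h) hab) hη
  · refine Or.inr fun a ha b hb' hab => ?_
    have h' : 5 * w / 4 ≤ x.val := by linarith
    simp only [hb a ha, hb b hb']
    exact mul_le_mul_of_nonneg_left
      (antitoneOn_tent (h'.trans ha.1) (h'.trans hb'.1) hab) hη

lemma exists_approx_midpoint_away_from_bumps (hη : 0 ≤ η) {n : ℕ} (hn : n ∉ S)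
    {x y : BumpSpace S η} (hxy : x.val ≤ y.val)
    (hfar : ∀ m ∈ S, m < n → y.val ≤ scale m ∨ 2 * scale m ≤ x.val) :
    ∃ z, max (dist x z) (dist z y) ≤ dist x y / 2 + η * (scale n / 400) := by
  have hb : ∀ t ∈ Icc x.val y.val, 0 ≤ bumps S t ∧ bumps S t ≤ scale n / 400 := fun t ht =>
    ⟨bumps_nonneg, bumps_le_of_forall_lt hn fun k hk hkn =>
      tent_eq_zero ((hfar k hk hkn).imp ht.2.trans ht.1.trans')⟩
  refine GraphSpace.exists_approx_midpoint hxy fun s hs t ht => ?_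
  rw [← mul_sub, abs_mul, abs_of_nonneg hη]
  have := hb s hs
  have := hb t ht
  exact mul_le_mul_of_nonneg_left (abs_sub_le_iff.2 ⟨by linarith, by linarith⟩) hη

lemma exists_approx_midpoint_of_notMem (hη : 0 ≤ η) {n : ℕ} (hn : n ∉ S)
    {x y : BumpSpace S η} (hd₁ : scale n / 4 ≤ dist x y) (hd₂ : dist x y ≤ 4 * scale n) :
    ∃ z, max (dist x z) (dist z y) ≤ (1 / 2 + η / 100) * dist x y := by
  wlog hxy : x.val ≤ y.val generalizing x y
  · obtain ⟨z, hz⟩ := this (dist_comm x y ▸ hd₁) (dist_comm x y ▸ hd₂) (le_of_not_ge hxy)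
    exact ⟨z, by rwa [max_comm, dist_comm y z, dist_comm z x, dist_comm y x] at hz⟩
  by_cases hnear : ∃ m ∈ S, m < n ∧ scale m < y.val ∧ x.val < 2 * scale m
  · obtain ⟨m, hm, hmn, hy, hx⟩ := hnear
    obtain ⟨z, hz⟩ := exists_midpoint_near_bump hη hm hmn hxy hd₂ hy hx
    exact ⟨z, hz.trans (by nlinarith [dist_nonneg (x := x) (y := y)])⟩
  · push Not at hnear
    obtain ⟨z, hz⟩ := exists_approx_midpoint_away_from_bumps hη hn hxy fun m hm hmn =>
      (le_or_gt y.val (scale m)).imp_right (hnear m hm hmn)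
    exact ⟨z, hz.trans (by nlinarith)⟩

lemma not_hasGapPair_of_notMem (hη : 0 ≤ η) {n : ℕ} (hn : n ∉ S) {r : ℝ}
    (hr : 1 / 2 + η / 100 < r) :
    ¬ HasGapPair (BumpSpace S η) r (scale n / 4) (4 * scale n) := by
  rintro ⟨x, y, hd₁, hd₂, hxy⟩
  obtain ⟨z, hz⟩ := exists_approx_midpoint_of_notMem hη hn hd₁ hd₂
  have hd : 0 < dist x y := lt_of_lt_of_le (by linarith [scale_pos n]) hd₁
  nlinarith [hxy z]

end BumpSpace

lemma hasGapPair_iff_mem {η : ℝ} (hη : 0 < η) (hη1 : η ≤ 1) {S : Set ℕ} {X : Type*}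
    [MetricSpace X] (h : lipDist (BumpSpace S η) X < ENNReal.ofReal (Real.log (1 + η / 100)))
    (n : ℕ) : HasGapPair X (1 / 2 + η / 20) (scale n / 2) (2 * scale n) ↔ n ∈ S := by
  set K : ℝ≥0 := ⟨1 + η / 100, by positivity⟩
  have hK : (K : ℝ) = 1 + η / 100 := rfl
  have hK0 : 0 < K := by rw [← NNReal.coe_pos, hK]; positivity
  obtain ⟨f, hf, hg⟩ := exists_lipschitzWith_of_lipDist_lt (K := K) h
  have hw := scale_pos n
  have hη2 : η * η ≤ η := mul_le_of_le_one_left hη.le hη1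
  have hη3 : η * (η * η) ≤ η * η := mul_le_of_le_one_left (by positivity) hη1
  constructor
  · intro hX
    by_contra hn
    refine not_hasGapPair_of_notMem hη.le hn ?_
      ((hX.map (by positivity) f.symm hK0 hg (by simpa using hf)).mono le_rfl ?_ ?_)
    · rw [lt_div_iff₀ (by positivity), hK]
      nlinarith
    · rw [le_div_iff₀ (by positivity), hK]
      nlinarith
    · rw [hK]
      nlinarith
  · intro hn
    refine ((hasGapPair_of_mem hη.le hη1 hn).map (by positivity) f hK0 hf hg).mono ?_ ?_ ?_
    · rw [le_div_iff₀ (by positivity), hK]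
      nlinarith
    · rw [div_le_div_iff_of_pos_left hw (by norm_num) (by positivity), hK]
      linarith
    · rw [hK]
      nlinarith

/-- For every `δ > 0`, the ball of radius `δ` around `[0,1]` in the Lipschitz distance is
not separable: no countable family in it is `d_L`-dense. -/
theorem ball_not_separable (δ : ℝ) (hδ : 0 < δ) :
    ¬ ∃ D : ℕ → CptMet,
      (∀ n, lipDist ↥(Set.Icc (0:ℝ) 1) (D n).carrier < ENNReal.ofReal δ) ∧
      (∀ Y : CptMet, lipDist ↥(Set.Icc (0:ℝ) 1) Y.carrier < ENNReal.ofReal δ →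
        ∀ ε : ℝ≥0∞, 0 < ε → ∃ n, lipDist Y.carrier (D n).carrier < ε) := by
  rintro ⟨D, -, hdense⟩
  set η : ℝ := min 1 (δ / 4)
  have hη : 0 < η := lt_min one_pos (by linarith)
  have hηδ : 2 * η < δ := by linarith [min_le_right 1 (δ / 4)]
  set S : Set ℕ := {n | ¬ HasGapPair (D n).carrier (1 / 2 + η / 20) (scale n / 2) (2 * scale n)}
  have := GraphSpace.compactSpace (lipschitzWith_mul_bumps (S := S) (η := η))
  have hY : lipDist (Icc (0 : ℝ) 1) (BumpSpace S η) < ENNReal.ofReal δ :=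
    (lipDist_Icc_bumpSpace_le hη.le).trans_lt ((ENNReal.ofReal_lt_ofReal_iff hδ).2 hηδ)
  obtain ⟨n, hn⟩ := hdense ⟨BumpSpace S η⟩ hY (ENNReal.ofReal (Real.log (1 + η / 100)))
    (ENNReal.ofReal_pos.2 (Real.log_pos (by linarith)))
  exact iff_not_self (hasGapPair_iff_mem hη (min_le_left _ _) hn n)
end
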